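/- Let M be a positive definite real (2n)×(2n) matrix and let H = i · M^{-1/2} Ω M^{-1/2} be the associated complex matrix. Then H is invertible (in particular 0 is not an eigenvalue of H), and for every complex number μ, μ is an eigenvalue of H if and only if −μ is an eigenvalue of H. -/

import Mathlib

/-! The square root `S = M^{1/2}` is symmetric and invertible, so `A = S⁻¹ Ω S⁻¹` is an invertible
real matrix that inherits the skew-symmetry of `Ω`. Hence `H = i A` is invertible with `Hᵀ = -H`,
and since a matrix and its transpose have the same spectrum, `σ(H) = σ(Hᵀ) = σ(-H) = -σ(H)`. -/

open Matrix

open scoped ComplexOrder in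
/-- The positive semidefinite square root of a positive semidefinite matrix (the definition
that Mathlib of December 2024 provided under this name; it has since been removed). -/
noncomputable def Matrix.PosSemidef.sqrt {n 𝕜 : Type*} [Fintype n] [RCLike 𝕜] [DecidableEq n]
    {A : Matrix n n 𝕜} (hA : PosSemidef A) : Matrix n n 𝕜 :=
  hA.1.eigenvectorUnitary.1 * diagonal ((↑) ∘ Real.sqrt ∘ hA.1.eigenvalues) *
  (star hA.1.eigenvectorUnitary : Matrix n n 𝕜)

/-- The standard `(2n)×(2n)` symplectic form `Ω = [[0, Iₙ], [−Iₙ, 0]]`. -/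
def symplecticForm (n : ℕ) : Matrix (Fin n ⊕ Fin n) (Fin n ⊕ Fin n) ℝ :=
  Matrix.fromBlocks 0 1 (-1) 0

namespace Matrix

section Spectrum

variable {R m : Type*} [CommRing R] [Fintype m] [DecidableEq m]

theorem spectrum_transpose (A : Matrix m m R) : spectrum R Aᵀ = spectrum R A := by
  ext μ
  rw [spectrum.mem_iff, spectrum.mem_iff, ← isUnit_transpose, transpose_sub,
    algebraMap_eq_diagonal, transpose_transpose, diagonal_transpose]

theorem neg_mem_spectrum_iff_of_transpose_eq_neg {A : Matrix m m R} (hA : Aᵀ = -A) (μ : R) :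
    -μ ∈ spectrum R A ↔ μ ∈ spectrum R A := by
  rw [← Set.mem_neg, spectrum.neg_eq, ← hA, spectrum_transpose]

end Spectrum

section SquareRoot

variable {n 𝕜 : Type*} [Fintype n] [RCLike 𝕜] [DecidableEq n] {A : Matrix n n 𝕜}

open scoped ComplexOrder

namespace PosSemidef

theorem sqrt_mul_self (hA : PosSemidef A) : hA.sqrt * hA.sqrt = A := by
  set U : Matrix n n 𝕜 := hA.1.eigenvectorUnitary.1
  set D : Matrix n n 𝕜 := diagonal ((↑) ∘ Real.sqrt ∘ hA.1.eigenvalues)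
  have hU : star U * U = 1 := Unitary.coe_star_mul_self _
  have hD : D * D = diagonal (((↑) : ℝ → 𝕜) ∘ hA.1.eigenvalues) := by
    rw [diagonal_mul_diagonal]
    congr 1 with i
    simp only [Function.comp_apply, ← RCLike.ofReal_mul,
      Real.mul_self_sqrt (hA.eigenvalues_nonneg i)]
  calc hA.sqrt * hA.sqrt = U * D * (star U * U) * D * star U := by
        simp only [sqrt, U, D, Matrix.mul_assoc]
    _ = U * (D * D) * star U := by rw [hU, Matrix.mul_one, Matrix.mul_assoc U]
    _ = A := by rw [hD]; exact hA.1.spectral_theorem.symm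

theorem isHermitian_sqrt (hA : PosSemidef A) : hA.sqrt.IsHermitian := by
  have hD : star ((↑) ∘ Real.sqrt ∘ hA.1.eigenvalues : n → 𝕜) =
      (↑) ∘ Real.sqrt ∘ hA.1.eigenvalues := by
    ext; simp
  rw [IsHermitian, sqrt, conjTranspose_mul, conjTranspose_mul, diagonal_conjTranspose, hD]
  simp only [← star_eq_conjTranspose, star_star, Matrix.mul_assoc]

end PosSemidef

theorem PosDef.isUnit_sqrt (hA : A.PosDef) : IsUnit hA.posSemidef.sqrt :=
  isUnit_of_mul_isUnit_left (hA.posSemidef.sqrt_mul_self ▸ hA.isUnit)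

end SquareRoot

end Matrix

theorem symplecticForm_eq_neg_J (n : ℕ) : symplecticForm n = -J (Fin n) ℝ := by
  simp [symplecticForm, J, fromBlocks_neg]

theorem transpose_symplecticForm (n : ℕ) : (symplecticForm n)ᵀ = -symplecticForm n := by
  rw [symplecticForm_eq_neg_J, transpose_neg, J_transpose]

theorem isUnit_symplecticForm (n : ℕ) : IsUnit (symplecticForm n) := by
  rw [symplecticForm_eq_neg_J, IsUnit.neg_iff, isUnit_iff_isUnit_det]
  exact isUnit_det_J _ _

/-- Let `H = i · M^{-1/2} Ω M^{-1/2}` for `M` positive definite.  Then `H` is invertible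
(in particular `0` is not in its spectrum), and its spectrum is symmetric about `0`:
`μ` is an eigenvalue of `H` iff `−μ` is. -/
theorem assoc_matrix_invertible_and_spectrum_symm (n : ℕ)
    (M : Matrix (Fin n ⊕ Fin n) (Fin n ⊕ Fin n) ℝ) (hM : M.PosDef)
    (H : Matrix (Fin n ⊕ Fin n) (Fin n ⊕ Fin n) ℂ)
    (hH : H = Complex.I •
      (((hM.posSemidef.sqrt)⁻¹ * symplecticForm n * (hM.posSemidef.sqrt)⁻¹).map
        Complex.ofReal)) :
    IsUnit H ∧ ∀ μ : ℂ, μ ∈ spectrum ℂ H ↔ -μ ∈ spectrum ℂ H := by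
  set S := hM.posSemidef.sqrt
  set A := S⁻¹ * symplecticForm n * S⁻¹
  have hS_inv : IsUnit S⁻¹ := isUnit_nonsing_inv_iff.mpr hM.isUnit_sqrt
  have hS_symm : S⁻¹ᵀ = S⁻¹ := by
    rw [transpose_nonsing_inv, ← conjTranspose_eq_transpose_of_trivial,
      hM.posSemidef.isHermitian_sqrt.eq]
  have hA_unit : IsUnit A := (hS_inv.mul (isUnit_symplecticForm n)).mul hS_inv
  have hA_skew : Aᵀ = -A := by
    rw [transpose_mul, transpose_mul, hS_symm, transpose_symplecticForm, Matrix.neg_mul,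
      Matrix.mul_neg, ← Matrix.mul_assoc]
  have hH_skew : Hᵀ = -H := by
    rw [hH, transpose_smul, ← transpose_map, hA_skew, Matrix.map_neg _ Complex.ofReal_neg,
      smul_neg]
  refine ⟨?_, fun μ => (neg_mem_spectrum_iff_of_transpose_eq_neg hH_skew μ).symm⟩
  rw [hH, Algebra.smul_def]
  exact (Complex.I_ne_zero.isUnit.map _).mul (hA_unit.map Complex.ofRealHom.mapMatrix)
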